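/- Let $g, h \colon (0,\infty) \to [0,\infty)$ with $g(t) \leq \frac{c}{\sqrt{1+t}}$ and $h(t) \leq \frac{c'}{1+t}$ for all $t$. Then for every $r \in (0,1]$, $\int_0^\infty t^{-1/2} \min\{g(t)\, r^{3}, h(t)\, r\}\,dt \leq C r^{3}(1 + |\log r|)$ for a constant $C$ depending only on $c, c'$. In particular $\int_0^\infty t^{-1/2}\min\left\{\frac{r^3}{\sqrt{1+t}}, \frac{r}{1+t}\right\} dt \leq C r^3 |\log r|$ for $r \leq 1/2$. -/
import Mathlib
open MeasureTheory Real Set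

private lemma mono_helper {F D : ℝ → ℝ} {s : Set ℝ} (hs : MeasurableSet s)
    (hF : Measurable F) (hD : IntegrableOn D s volume)
    (hbd : ∀ t ∈ s, 0 ≤ F t ∧ F t ≤ D t) :
    IntegrableOn F s volume ∧ (∫ t in s, F t) ≤ ∫ t in s, D t := by
  have hint : IntegrableOn F s volume := by
    refine hD.mono' (hF.aestronglyMeasurable) ?_
    filter_upwards [ae_restrict_mem hs] with t ht
    have h := hbd t ht
    rw [Real.norm_eq_abs, abs_of_nonneg h.1]; exact h.2
  exact ⟨hint, setIntegral_mono_on hint hD hs (fun t ht => (hbd t ht).2)⟩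

private lemma key (a b r : ℝ) (ha : 0 < a) (hb : 0 < b) (hr : 0 < r) (hr1 : r ≤ 1) :
    IntegrableOn (fun t => t ^ (-(1:ℝ)/2) *
        min (a / Real.sqrt (1+t) * r^3) (b / (1+t) * r)) (Ioi 0) volume ∧
    (∫ t in Ioi (0:ℝ), t ^ (-(1:ℝ)/2) *
        min (a / Real.sqrt (1+t) * r^3) (b / (1+t) * r))
      ≤ 2*(a+b)*r^3 + 4*a*r^3*|Real.log r| := by
  set F : ℝ → ℝ := fun t => t ^ (-(1:ℝ)/2) *
      min (a / Real.sqrt (1+t) * r^3) (b / (1+t) * r) with hF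
  have hFmeas : Measurable F := by
    rw [hF]; fun_prop
  set s : ℝ := r⁻¹ with hs
  have hs1 : 1 ≤ s := one_le_inv_iff₀.2 ⟨hr, hr1⟩
  set T : ℝ := s^4 with hT
  have hT1 : 1 ≤ T := one_le_pow₀ hs1
  have hT0 : (0:ℝ) < T := lt_of_lt_of_le one_pos hT1
  -- pointwise facts
  have hFnn : ∀ t ∈ Ioi (0:ℝ), 0 ≤ F t := by
    intro t ht
    have ht0 : (0:ℝ) < t := ht
    have h1t : (0:ℝ) < 1 + t := by linarith
    apply mul_nonneg (Real.rpow_nonneg ht0.le _)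
    apply le_min
    · positivity
    · positivity
  -- piece 1 : Ioc 0 1
  obtain ⟨hint1, hle1⟩ :
      IntegrableOn F (Ioc 0 1) volume ∧
      (∫ t in Ioc (0:ℝ) 1, F t) ≤ ∫ t in Ioc (0:ℝ) 1, a * r^3 * t ^ (-(1:ℝ)/2) := by
    apply mono_helper measurableSet_Ioc hFmeas
    · exact (intervalIntegral.intervalIntegrable_rpow' (r := -(1:ℝ)/2)
        (by norm_num)).1.const_mul (a * r^3)
    · intro t ht
      have ht0 : (0:ℝ) < t := ht.1
      have h1t : (1:ℝ) ≤ Real.sqrt (1+t) := Real.one_le_sqrt.2 (by linarith)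
      refine ⟨hFnn t ht0, ?_⟩
      have h2 : min (a / Real.sqrt (1+t) * r^3) (b / (1+t) * r) ≤ a * r^3 := by
        refine (min_le_left _ _).trans ?_
        have : a / Real.sqrt (1+t) ≤ a := by
          apply div_le_self ha.le h1t
        nlinarith [pow_pos hr 3]
      calc F t ≤ t ^ (-(1:ℝ)/2) * (a * r^3) :=
            mul_le_mul_of_nonneg_left h2 (Real.rpow_nonneg ht0.le _)
        _ = a * r^3 * t ^ (-(1:ℝ)/2) := by ring
  -- piece 2 : Ioc 1 T
  obtain ⟨hint2, hle2⟩ :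
      IntegrableOn F (Ioc 1 T) volume ∧
      (∫ t in Ioc (1:ℝ) T, F t) ≤ ∫ t in Ioc (1:ℝ) T, a * r^3 * t⁻¹ := by
    apply mono_helper measurableSet_Ioc hFmeas
    · apply IntegrableOn.mono_set _ Ioc_subset_Icc_self
      apply ContinuousOn.integrableOn_Icc
      apply ContinuousOn.mul continuousOn_const
      exact ContinuousOn.inv₀ continuousOn_id (fun x hx => by
        have := hx.1; intro h; rw [h] at this; linarith)
    · intro t ht
      have ht0 : (0:ℝ) < t := lt_trans one_pos ht.1
      refine ⟨hFnn t ht0, ?_⟩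
      have hsq : Real.sqrt t ≤ Real.sqrt (1+t) := Real.sqrt_le_sqrt (by linarith)
      have hsqt : (0:ℝ) < Real.sqrt t := Real.sqrt_pos.2 ht0
      have h2 : min (a / Real.sqrt (1+t) * r^3) (b / (1+t) * r)
          ≤ a / Real.sqrt t * r^3 := by
        refine (min_le_left _ _).trans ?_
        have : a / Real.sqrt (1+t) ≤ a / Real.sqrt t :=
          div_le_div_of_nonneg_left ha.le hsqt hsq
        nlinarith [pow_pos hr 3]
      have hkey : t ^ (-(1:ℝ)/2) * (a / Real.sqrt t * r^3) = a * r^3 * t⁻¹ := by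
        rw [Real.sqrt_eq_rpow, div_eq_mul_inv a, ← Real.rpow_neg ht0.le]
        have : t ^ (-(1:ℝ)/2) * (a * t ^ (-(1/2):ℝ) * r^3)
            = a * r^3 * (t ^ (-(1:ℝ)/2) * t ^ (-(1/2):ℝ)) := by ring
        rw [this, ← Real.rpow_add ht0]
        norm_num [Real.rpow_neg_one]
      calc F t ≤ t ^ (-(1:ℝ)/2) * (a / Real.sqrt t * r^3) :=
            mul_le_mul_of_nonneg_left h2 (Real.rpow_nonneg ht0.le _)
        _ = a * r^3 * t⁻¹ := hkey
  -- piece 3 : Ioi T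
  obtain ⟨hint3, hle3⟩ :
      IntegrableOn F (Ioi T) volume ∧
      (∫ t in Ioi T, F t) ≤ ∫ t in Ioi T, b * r * t ^ (-(3:ℝ)/2) := by
    apply mono_helper measurableSet_Ioi hFmeas
    · exact (integrableOn_Ioi_rpow_of_lt (by norm_num) hT0).const_mul _
    · intro t ht
      have ht0 : (0:ℝ) < t := lt_trans hT0 ht
      refine ⟨hFnn t ht0, ?_⟩
      have h2 : min (a / Real.sqrt (1+t) * r^3) (b / (1+t) * r) ≤ b / t * r := by
        refine (min_le_right _ _).trans ?_
        have : b / (1+t) ≤ b / t := div_le_div_of_nonneg_left hb.le ht0 (by linarith)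
        nlinarith
      have hkey : t ^ (-(1:ℝ)/2) * (b / t * r) = b * r * t ^ (-(3:ℝ)/2) := by
        rw [div_eq_mul_inv b, ← Real.rpow_neg_one t]
        have : t ^ (-(1:ℝ)/2) * (b * t ^ (-1:ℝ) * r)
            = b * r * (t ^ (-(1:ℝ)/2) * t ^ (-1:ℝ)) := by ring
        rw [this, ← Real.rpow_add ht0]
        norm_num
      calc F t ≤ t ^ (-(1:ℝ)/2) * (b / t * r) :=
            mul_le_mul_of_nonneg_left h2 (Real.rpow_nonneg ht0.le _)
        _ = b * r * t ^ (-(3:ℝ)/2) := hkey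
  -- compute the three dominating integrals
  have hI1 : (∫ t in Ioc (0:ℝ) 1, a * r^3 * t ^ (-(1:ℝ)/2)) = a * r^3 * 2 := by
    rw [← intervalIntegral.integral_of_le (by norm_num : (0:ℝ) ≤ 1),
      intervalIntegral.integral_const_mul, integral_rpow (Or.inl (by norm_num))]
    rw [Real.one_rpow, Real.zero_rpow (by norm_num)]
    norm_num
  have hI2 : (∫ t in Ioc (1:ℝ) T, a * r^3 * t⁻¹) = a * r^3 * (4 * |Real.log r|) := by
    rw [← intervalIntegral.integral_of_le hT1,
      intervalIntegral.integral_const_mul, integral_inv_of_pos one_pos hT0]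
    have hlogr : Real.log r ≤ 0 := Real.log_nonpos hr.le hr1
    have : Real.log (T/1) = 4 * |Real.log r| := by
      rw [div_one, hT, Real.log_pow, hs, Real.log_inv, abs_of_nonpos hlogr]
      push_cast; ring
    rw [this]
  have hI3 : (∫ t in Ioi T, b * r * t ^ (-(3:ℝ)/2)) = b * r * (2 * r^2) := by
    rw [MeasureTheory.integral_const_mul, integral_Ioi_rpow_of_lt (by norm_num) hT0]
    have h1 : (-(3:ℝ)/2 + 1) = -(1/2 : ℝ) := by norm_num
    have h2 : (T:ℝ) ^ (-(1/2:ℝ)) = r^2 := by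
      rw [hT, hs, ← Real.rpow_natCast r⁻¹ 4, ← Real.rpow_mul (inv_nonneg.2 hr.le),
        show ((4:ℕ):ℝ) * -(1/2 : ℝ) = ((-2 : ℤ) : ℝ) by push_cast; ring,
        Real.rpow_intCast, zpow_neg, inv_zpow, inv_inv, zpow_two, pow_two]
    rw [h1, h2]
    ring
  -- assemble
  have hdisj12 : Disjoint (Ioc (0:ℝ) 1) (Ioc 1 T) := Ioc_disjoint_Ioc.2 (by simp)
  have hdisj3 : Disjoint (Ioc (0:ℝ) T) (Ioi T) := Ioc_disjoint_Ioi le_rfl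
  have hu1 : Ioc (0:ℝ) 1 ∪ Ioc 1 T = Ioc 0 T := Ioc_union_Ioc_eq_Ioc (by norm_num) hT1
  have hu2 : Ioc (0:ℝ) T ∪ Ioi T = Ioi 0 := Ioc_union_Ioi_eq_Ioi hT0.le
  have hint12 : IntegrableOn F (Ioc 0 T) volume := by
    rw [← hu1]; exact hint1.union hint2
  have hintall : IntegrableOn F (Ioi 0) volume := by
    rw [← hu2]; exact hint12.union hint3
  refine ⟨hintall, ?_⟩
  have hsplit : (∫ t in Ioi (0:ℝ), F t)
      = (∫ t in Ioc (0:ℝ) 1, F t) + (∫ t in Ioc (1:ℝ) T, F t) + (∫ t in Ioi T, F t) := by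
    rw [← hu2, setIntegral_union hdisj3 measurableSet_Ioi hint12 hint3,
      ← hu1, setIntegral_union hdisj12 measurableSet_Ioc hint1 hint2]
  rw [hsplit]
  have := add_le_add (add_le_add hle1 hle2) hle3
  rw [hI1, hI2, hI3] at this
  nlinarith [this, abs_nonneg (Real.log r), pow_pos hr 3]

theorem stmt19 (c c' : ℝ) (hc : 0 < c) (hc' : 0 < c') :
    ∃ C > (0:ℝ),
      (∀ g h : ℝ → ℝ,
        (∀ t : ℝ, 0 < t → 0 ≤ g t ∧ g t ≤ c / Real.sqrt (1 + t)) →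
        (∀ t : ℝ, 0 < t → 0 ≤ h t ∧ h t ≤ c' / (1 + t)) →
        ∀ r : ℝ, 0 < r → r ≤ 1 →
          (∫ t in Ioi (0:ℝ), t ^ (-(1:ℝ)/2) * min (g t * r ^ 3) (h t * r))
            ≤ C * r ^ 3 * (1 + |Real.log r|)) ∧
      (∀ r : ℝ, 0 < r → r ≤ 1/2 →
        (∫ t in Ioi (0:ℝ),
            t ^ (-(1:ℝ)/2) * min (r ^ 3 / Real.sqrt (1 + t)) (r / (1 + t)))
          ≤ C * r ^ 3 * |Real.log r|) := by
  refine ⟨4*(c+c') + 20, by positivity, ?_, ?_⟩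
  · intro g h hg hh r hr hr1
    obtain ⟨hint, hle⟩ := key c c' r hc hc' hr hr1
    have hmono : (∫ t in Ioi (0:ℝ), t ^ (-(1:ℝ)/2) * min (g t * r ^ 3) (h t * r))
        ≤ ∫ t in Ioi (0:ℝ), t ^ (-(1:ℝ)/2) *
            min (c / Real.sqrt (1+t) * r^3) (c' / (1+t) * r) := by
      apply integral_mono_of_nonneg
      · filter_upwards [ae_restrict_mem measurableSet_Ioi] with t ht
        have ht0 : (0:ℝ) < t := ht
        have h1t : (0:ℝ) < 1 + t := by linarith
        apply mul_nonneg (Real.rpow_nonneg ht0.le _)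
        exact le_min (by nlinarith [(hg t ht0).1, pow_pos hr 3])
          (mul_nonneg (hh t ht0).1 hr.le)
      · exact hint
      · filter_upwards [ae_restrict_mem measurableSet_Ioi] with t ht
        have ht0 : (0:ℝ) < t := ht
        apply mul_le_mul_of_nonneg_left _ (Real.rpow_nonneg ht0.le _)
        exact min_le_min
          (mul_le_mul_of_nonneg_right (hg t ht0).2 (by positivity))
          (mul_le_mul_of_nonneg_right (hh t ht0).2 hr.le)
    refine hmono.trans (hle.trans ?_)
    nlinarith [abs_nonneg (Real.log r), pow_pos hr 3, mul_pos hc (pow_pos hr 3),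
      mul_pos hc' (pow_pos hr 3),
      mul_nonneg (mul_pos hc (pow_pos hr 3)).le (abs_nonneg (Real.log r)),
      mul_nonneg (mul_pos hc' (pow_pos hr 3)).le (abs_nonneg (Real.log r)),
      mul_nonneg (pow_pos hr 3).le (abs_nonneg (Real.log r))]
  · intro r hr hr2
    have hr1 : r ≤ 1 := by linarith
    obtain ⟨hint, hle⟩ := key 1 1 r one_pos one_pos hr hr1
    have heq : (∫ t in Ioi (0:ℝ),
          t ^ (-(1:ℝ)/2) * min (r ^ 3 / Real.sqrt (1 + t)) (r / (1 + t)))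
        = ∫ t in Ioi (0:ℝ), t ^ (-(1:ℝ)/2) *
            min ((1:ℝ) / Real.sqrt (1+t) * r^3) ((1:ℝ) / (1+t) * r) := by
      congr 1; funext t; congr 2 <;> ring
    rw [heq]
    refine hle.trans ?_
    have hlog2 : (0.6931471803 : ℝ) < Real.log 2 := Real.log_two_gt_d9
    have hlogr : Real.log 2 ≤ |Real.log r| := by
      have h1 : Real.log r ≤ Real.log (1/2) := by
        apply Real.log_le_log hr hr2
      rw [abs_of_nonpos (Real.log_nonpos hr.le hr1)]
      rw [Real.log_div one_ne_zero two_ne_zero, Real.log_one] at h1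
      linarith
    nlinarith [pow_pos hr 3, abs_nonneg (Real.log r), hlog2,
      mul_le_mul_of_nonneg_left hlogr (pow_pos hr 3).le,
      mul_nonneg (mul_nonneg (show (0:ℝ) ≤ 4*(c+c') by linarith) (pow_pos hr 3).le)
        (abs_nonneg (Real.log r))]
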